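/- arXiv:2209.00822 — 3 statements merged into one kernel-verified Lean document; each statement's English description precedes it below -/
import Mathlib

section
/- Let N ∈ ℕ, 1 ≤ n⁻ ≤ N, β ∈ (0,1), λ > 0, ȳ > 0, let W⁻ be a probability weighting function, let h⁻ be the loss decision weights, and let v satisfy 0 ≤ v ≤ ȳ·∑_{i=1}^{n⁻} h⁻_i. Then there exist integers ℓ₁, ℓ₂ with 0 ≤ ℓ₁ < ℓ₂ ≤ n⁻ and a real number Y with 0 ≤ Y ≤ ȳ, namely Y = (v − ȳ·∑_{i=1}^{ℓ₁} h⁻_i) / ∑_{i=ℓ₁+1}^{ℓ₂} h⁻_i, such that the vector y* defined by y*_i = ȳ for 1 ≤ i ≤ ℓ₁, y*_i = Y for ℓ₁+1 ≤ i ≤ ℓ₂, and y*_i = 0 for ℓ₂+1 ≤ i ≤ n⁻ is a global optimum of the price-constrained loss subproblem: y* is feasible and for every feasible y, −∑_{i=1}^{n⁻} (y*_i/λ)^{1/β} ≤ −∑_{i=1}^{n⁻} (y_i/λ)^{1/β}. -/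
open Finset

/-- An inverse S-shaped function on `[0,1]`: strictly increasing, continuously
differentiable, with a derivative strictly decreasing then strictly increasing. -/
def InverseSShaped (W : ℝ → ℝ) : Prop :=
  StrictMonoOn W (Set.Icc (0 : ℝ) 1) ∧
  ContDiffOn ℝ 1 W (Set.Icc (0 : ℝ) 1) ∧
  ∃ x₀ ∈ Set.Icc (0 : ℝ) 1,
    StrictAntiOn (deriv W) (Set.Icc (0 : ℝ) x₀) ∧ StrictMonoOn (deriv W) (Set.Icc x₀ 1)

/-- A probability weighting function: inverse S-shaped with `W 0 = 0` and `W 1 = 1`. -/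
def IsPWF (W : ℝ → ℝ) : Prop :=
  InverseSShaped W ∧ W 0 = 0 ∧ W 1 = 1

/-- Loss decision weights: `h⁻_i = W⁻(i/N) − W⁻((i−1)/N)` for `i = 1,…,n⁻`. -/
noncomputable def lossW (W : ℝ → ℝ) (N i : ℕ) : ℝ :=
  W ((i : ℝ) / N) - W (((i : ℝ) - 1) / N)

/-- Feasibility for the loss subproblem: `y_1 ≥ y_2 ≥ … ≥ y_n ≥ 0` and `∑ h⁻_i y_i = v`. -/
def LossFeasible (W : ℝ → ℝ) (N n : ℕ) (v : ℝ) (y : ℕ → ℝ) : Prop :=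
  0 ≤ y n ∧ (∀ i ∈ Finset.Icc 1 (n - 1), y (i + 1) ≤ y i) ∧
  ∑ i ∈ Finset.Icc 1 n, lossW W N i * y i = v

/-- Feasibility for the price-constrained loss subproblem:
`ȳ ≥ y_1 ≥ y_2 ≥ … ≥ y_n ≥ 0` and `∑ h⁻_i y_i = v`. -/
def PLossFeasible (W : ℝ → ℝ) (N n : ℕ) (ybar v : ℝ) (y : ℕ → ℝ) : Prop :=
  y 1 ≤ ybar ∧ 0 ≤ y n ∧ (∀ i ∈ Finset.Icc 1 (n - 1), y (i + 1) ≤ y i) ∧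
  ∑ i ∈ Finset.Icc 1 n, lossW W N i * y i = v

/-!
Substituting the increments `e k = y k - y (k + 1)` (with `y 0 = ȳ` and `y (n + 1) = 0`) turns
the feasible set into the polytope of nonnegative weights on `{0, …, n}` with total mass `ȳ` and
moment `∑ H k * e k = v`, where `H k = h₁ + ⋯ + h_k` is strictly increasing, and turns the
objective into a convex function of `e`, since `y` is recovered by tail sums. By Krein–Milman a
convex function attains its maximum over this compact polytope at an extreme point, and an extreme
point has at most two nonzero weights: three of them could be perturbed in both directions along a
vector preserving both linear constraints. Weights `ȳ - Y` at `ℓ₁` and `Y` at `ℓ₂` are exactly the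
increments of the three-level vector of the statement.
-/

section MomentSet

variable {ι : Type*} (s : Finset ι) (x : ι → ℝ) (m μ : ℝ)

def momentSet : Set (ι → ℝ) :=
  {w | (∀ i ∉ s, w i = 0) ∧ (∀ i, 0 ≤ w i) ∧ ∑ i ∈ s, w i = m ∧ ∑ i ∈ s, x i * w i = μ}

theorem convex_momentSet : Convex ℝ (momentSet s x m μ) := by
  rintro w ⟨hw0, hw, hwm, hwμ⟩ w' ⟨hw0', hw', hwm', hwμ'⟩ a b ha hb hab
  refine ⟨fun i hi => by simp [hw0 i hi, hw0' i hi], fun i => ?_, ?_, ?_⟩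
  · simp only [Pi.add_apply, Pi.smul_apply, smul_eq_mul]
    have := hw i; have := hw' i; positivity
  · simp only [Pi.add_apply, Pi.smul_apply, smul_eq_mul, sum_add_distrib, ← mul_sum, hwm, hwm']
    rw [← add_mul, hab, one_mul]
  · simp only [Pi.add_apply, Pi.smul_apply, smul_eq_mul, mul_add, sum_add_distrib,
      mul_left_comm _ a, mul_left_comm _ b, ← mul_sum, hwμ, hwμ']
    rw [← add_mul, hab, one_mul]

variable {s x m μ}

theorem le_of_mem_momentSet {w : ι → ℝ} (hw : w ∈ momentSet s x m μ) (i : ι) : w i ≤ m := by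
  obtain ⟨hw0, hw, hwm, -⟩ := hw
  by_cases hi : i ∈ s
  · exact hwm ▸ single_le_sum (fun j _ => hw j) hi
  · exact hw0 i hi ▸ hwm ▸ sum_nonneg fun j _ => hw j

variable (s x m μ)

theorem isCompact_momentSet : IsCompact (momentSet s x m μ) := by
  refine (isCompact_univ_pi fun _ => isCompact_Icc (a := 0) (b := m)).of_isClosed_subset ?_
    fun w hw i _ => ⟨hw.2.1 i, le_of_mem_momentSet hw i⟩
  simp only [momentSet, Set.ofPred_and, Set.ofPred_forall]
  refine .inter (isClosed_iInter fun i => isClosed_iInter fun _ =>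
    isClosed_eq (continuous_apply i) continuous_const) <|
    .inter (isClosed_iInter fun i => isClosed_le continuous_const (continuous_apply i)) <|
    .inter (isClosed_eq (by fun_prop) continuous_const) (isClosed_eq (by fun_prop) continuous_const)

variable {s x m μ}

theorem eq_zero_of_mem_extremePoints_momentSet {w d : ι → ℝ}
    (hw : w ∈ (momentSet s x m μ).extremePoints ℝ) (hd0 : ∀ i ∉ s, d i = 0)
    (hdm : ∑ i ∈ s, d i = 0) (hdμ : ∑ i ∈ s, x i * d i = 0) (hdw : ∀ i, |d i| ≤ w i) : d = 0 := by
  obtain ⟨⟨hw0, -, hwm, hwμ⟩, hext⟩ := mem_extremePoints.1 hw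
  have hmem : ∀ c : ℝ, |c| ≤ 1 → w + c • d ∈ momentSet s x m μ := fun c hc =>
    ⟨fun i hi => by simp [hw0 i hi, hd0 i hi],
     fun i => by
      have : |c * d i| ≤ w i := by
        rw [abs_mul]
        exact (mul_le_of_le_one_left (abs_nonneg _) hc).trans (hdw i)
      simp only [Pi.add_apply, Pi.smul_apply, smul_eq_mul]
      linarith [neg_abs_le (c * d i)],
     by simp [sum_add_distrib, ← mul_sum, hwm, hdm],
     by simp [mul_add, sum_add_distrib, mul_left_comm _ c, ← mul_sum, hwμ, hdμ]⟩
  have hseg : w ∈ openSegment ℝ (w + (-1 : ℝ) • d) (w + (1 : ℝ) • d) :=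
    ⟨1/2, 1/2, by norm_num, by norm_num, by norm_num, by
      ext i; simp only [Pi.add_apply, Pi.smul_apply, smul_eq_mul]; ring⟩
  have := (hext _ (hmem (-1) (by norm_num)) _ (hmem 1 (by norm_num)) hseg).2
  simpa using this

theorem eq_zero_or_eq_zero_or_eq_zero_of_mem_extremePoints_momentSet [DecidableEq ι]
    {w : ι → ℝ} (hw : w ∈ (momentSet s x m μ).extremePoints ℝ) (hx : Set.InjOn x s)
    {a b c : ι} (ha : a ∈ s) (hb : b ∈ s) (hc : c ∈ s) (hab : a ≠ b) (hac : a ≠ c)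
    (hbc : b ≠ c) : w a = 0 ∨ w b = 0 ∨ w c = 0 := by
  by_contra! hne
  obtain ⟨hwa, hwb, hwc⟩ := hne
  have hw0 := (extremePoints_subset hw).2.1
  set r := min (w a) (min (w b) (w c))
  set D := |x c - x b| + |x a - x c| + |x b - x a|
  have hxac : x a - x c ≠ 0 := sub_ne_zero.2 fun h => hac (hx ha hc h)
  have hr : 0 < r := lt_min ((hw0 a).lt_of_ne' hwa) (lt_min ((hw0 b).lt_of_ne' hwb)
    ((hw0 c).lt_of_ne' hwc))
  have hD : 0 < D := by positivity
  -- `(x c - x b, x a - x c, x b - x a)` is orthogonal to `(1, 1, 1)` and to `(x a, x b, x c)`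
  set u : ι → ℝ := Pi.single a (x c - x b) + Pi.single b (x a - x c) + Pi.single c (x b - x a)
  have hd := eq_zero_of_mem_extremePoints_momentSet (d := (r / D) • u) hw ?_ ?_ ?_ ?_
  · have := congrFun hd b
    simp [u, hab.symm, hbc, hr.ne', hD.ne', hxac] at this
  · intro i hi
    simp [u, show i ≠ a by rintro rfl; exact hi ha,
      show i ≠ b by rintro rfl; exact hi hb, show i ≠ c by rintro rfl; exact hi hc]
  · simp [u, ← mul_sum, sum_add_distrib, sum_pi_single', ha, hb, hc]
  · simp [u, mul_add, sum_add_distrib, Pi.single_apply, ha, hb, hc]; ring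
  · intro i
    rw [Pi.smul_apply, smul_eq_mul, abs_mul, abs_of_pos (div_pos hr hD)]
    by_cases hi : i = a ∨ i = b ∨ i = c
    · have hui : |u i| ≤ D := by
        have := abs_nonneg (x c - x b); have := abs_nonneg (x a - x c)
        have := abs_nonneg (x b - x a)
        rcases hi with rfl | rfl | rfl <;> simp [u, D, hab, hac, hbc, hab.symm, hac.symm,
          hbc.symm] <;> linarith
      have hri : r ≤ w i := by rcases hi with rfl | rfl | rfl <;> simp [r]
      calc r / D * |u i| ≤ r / D * D := by gcongr
        _ = r := div_mul_cancel₀ r hD.ne'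
        _ ≤ w i := hri
    · push Not at hi
      simpa [u, hi.1, hi.2.1, hi.2.2] using hw0 i

variable (x m μ) in
noncomputable def twoPointLevel (a b : ι) : ℝ := (μ - m * x a) / (x b - x a)

variable (x m μ) in
noncomputable def twoPointWeights [DecidableEq ι] (a b : ι) : ι → ℝ :=
  Pi.single a (m - twoPointLevel x m μ a b) + Pi.single b (twoPointLevel x m μ a b)

theorem eq_twoPointWeights [DecidableEq ι] {w : ι → ℝ} {a b : ι}
    (hw : w ∈ momentSet s x m μ) (ha : a ∈ s) (hb : b ∈ s) (hab : a ≠ b) (hx : x a ≠ x b)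
    (hsupp : ∀ i, w i ≠ 0 → i = a ∨ i = b) : w = twoPointWeights x m μ a b := by
  have hw2 : w = Pi.single a (w a) + Pi.single b (w b) := by
    ext i
    by_cases hia : i = a
    · subst hia; simp [hab]
    by_cases hib : i = b
    · subst hib; simp [hia]
    simp only [Pi.add_apply, Pi.single_apply, hia, hib, if_false, add_zero]
    by_contra h
    exact (hsupp i h).elim hia hib
  obtain ⟨-, -, hwm, hwμ⟩ := hw
  rw [hw2] at hwm hwμ
  simp [sum_add_distrib, mul_add, Pi.single_apply, ha, hb] at hwm hwμ
  have hwb : w b = twoPointLevel x m μ a b := by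
    rw [twoPointLevel, eq_div_iff (sub_ne_zero.2 hx.symm)]
    linear_combination hwμ - x a * hwm
  rw [hw2, twoPointWeights, ← hwb, show w a = m - w b by linarith]

theorem exists_eq_twoPointWeights_of_mem_extremePoints [LinearOrder ι] {w : ι → ℝ}
    (hw : w ∈ (momentSet s x m μ).extremePoints ℝ) (hx : Set.InjOn x s) (hs : 1 < #s) :
    ∃ a ∈ s, ∃ b ∈ s, a < b ∧ w = twoPointWeights x m μ a b := by
  have hcard : #{i ∈ s | w i ≠ 0} ≤ 2 := by
    by_contra! h
    obtain ⟨a, ha, b, hb, c, hc, hab, hac, hbc⟩ := two_lt_card.1 h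
    simp only [mem_filter] at ha hb hc
    rcases eq_zero_or_eq_zero_or_eq_zero_of_mem_extremePoints_momentSet hw hx ha.1 hb.1 hc.1
      hab hac hbc with h | h | h
    exacts [ha.2 h, hb.2 h, hc.2 h]
  have hpair : ∀ a ∈ s, ∀ b ∈ s, a < b → {i ∈ s | w i ≠ 0} ⊆ {a, b} →
      ∃ a ∈ s, ∃ b ∈ s, a < b ∧ w = twoPointWeights x m μ a b := by
    intro a ha b hb hab hsub
    refine ⟨a, ha, b, hb, hab, eq_twoPointWeights (extremePoints_subset hw) ha hb hab.ne
      (hx.ne ha hb hab.ne) fun i hi => ?_⟩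
    have his : i ∈ s := by
      by_contra h
      exact hi ((extremePoints_subset hw).1 i h)
    simpa using hsub (mem_filter.2 ⟨his, hi⟩)
  obtain ⟨u, htu, hus, hu⟩ := exists_subsuperset_card_eq (filter_subset _ s) hcard hs
  obtain ⟨a, b, hab, rfl⟩ := card_eq_two.1 hu
  rcases hab.lt_or_gt with h | h
  · exact hpair a (hus (by simp)) b (hus (by simp)) h htu
  · exact hpair b (hus (by simp)) a (hus (by simp)) h (pair_comm a b ▸ htu)

theorem finite_extremePoints_momentSet [LinearOrder ι] (hx : Set.InjOn x s) (hs : 1 < #s) :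
    ((momentSet s x m μ).extremePoints ℝ).Finite :=
  ((s ×ˢ s).finite_toSet.image fun p => twoPointWeights x m μ p.1 p.2).subset fun w hw => by
    obtain ⟨a, ha, b, hb, -, rfl⟩ := exists_eq_twoPointWeights_of_mem_extremePoints hw hx hs
    exact ⟨(a, b), by simp [ha, hb], rfl⟩

end MomentSet

theorem ConvexOn.exists_mem_extremePoints_isMaxOn {E : Type*} [AddCommGroup E] [Module ℝ E]
    [TopologicalSpace E] [T2Space E] [IsTopologicalAddGroup E] [ContinuousSMul ℝ E]
    [LocallyConvexSpace ℝ E] {K : Set E} {f : E → ℝ} (hf : ConvexOn ℝ K f) (hK : IsCompact K)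
    (hne : K.Nonempty) (hfin : (K.extremePoints ℝ).Finite) :
    ∃ y ∈ K.extremePoints ℝ, IsMaxOn f K y := by
  obtain ⟨y, hy, hmax⟩ := Set.exists_max_image _ f hfin (hK.extremePoints_nonempty hne)
  have hhull := closure_convexHull_extremePoints hK hf.1
  rw [(hfin.isClosed_convexHull ℝ).closure_eq] at hhull
  refine ⟨y, hy, isMaxOn_iff.2 fun z hz => ?_⟩
  obtain ⟨y', hy', hzy'⟩ := hf.exists_ge_of_mem_convexHull extremePoints_subset (hhull ▸ hz)
  exact hzy'.trans (hmax y' hy')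

section LossSubproblem

variable {W : ℝ → ℝ} {N n : ℕ} {ybar v : ℝ}

theorem lossW_pos (hW : StrictMonoOn W (Set.Icc 0 1)) {i : ℕ} (hi : 1 ≤ i) (hiN : i ≤ N) :
    0 < lossW W N i := by
  have hN : (0 : ℝ) < N := by exact_mod_cast (show 0 < N by omega)
  have hi' : (1 : ℝ) ≤ i := by exact_mod_cast hi
  have hiN' : (i : ℝ) ≤ N := by exact_mod_cast hiN
  refine sub_pos.2 (hW ⟨?_, ?_⟩ ⟨?_, ?_⟩ ?_)
  · exact div_nonneg (by linarith) hN.le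
  · rw [div_le_one hN]; linarith
  · positivity
  · rwa [div_le_one hN]
  · exact div_lt_div_of_pos_right (by linarith) hN

variable (W N) in
noncomputable def cumLossW (k : ℕ) : ℝ := ∑ i ∈ Icc 1 k, lossW W N i

theorem cumLossW_sub_cumLossW {a b : ℕ} (hab : a ≤ b) :
    cumLossW W N b - cumLossW W N a = ∑ i ∈ Icc (a + 1) b, lossW W N i := by
  rw [cumLossW, cumLossW, sub_eq_iff_eq_add', ← Ico_add_one_right_eq_Icc,
    ← Ico_add_one_right_eq_Icc, ← Ico_add_one_right_eq_Icc,
    sum_Ico_consecutive _ (by omega) (by omega)]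

theorem cumLossW_strictMonoOn (hW : StrictMonoOn W (Set.Icc 0 1)) :
    StrictMonoOn (cumLossW W N) (Set.Iic N) := fun a _ b hb hab => by
  rw [← sub_pos, cumLossW_sub_cumLossW hab.le]
  exact sum_pos (fun i hi => lossW_pos hW (by simp at hi; omega) ((mem_Icc.1 hi).2.trans hb))
    ⟨b, by simp; omega⟩

variable (n) in
def tailSum : (ℕ → ℝ) →ₗ[ℝ] ℕ → ℝ where
  toFun e i := ∑ j ∈ Icc i n, e j
  map_add' e e' := by ext i; simp [sum_add_distrib]
  map_smul' c e := by ext i; simp [mul_sum]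

theorem tailSum_apply (e : ℕ → ℝ) (i : ℕ) : tailSum n e i = ∑ j ∈ Icc i n, e j := rfl

theorem tailSum_nonneg {e : ℕ → ℝ} (he : ∀ j, 0 ≤ e j) (i : ℕ) : 0 ≤ tailSum n e i :=
  sum_nonneg (s := Icc i n) fun j _ => he j

theorem tailSum_le_tailSum {e : ℕ → ℝ} (he : ∀ j, 0 ≤ e j) {i j : ℕ} (hij : i ≤ j) :
    tailSum n e j ≤ tailSum n e i :=
  sum_le_sum_of_subset_of_nonneg (Icc_subset_Icc_left hij) fun k _ _ => he k

theorem sum_mul_tailSum (h e : ℕ → ℝ) :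
    ∑ i ∈ Icc 1 n, h i * tailSum n e i = ∑ k ∈ Icc 0 n, (∑ i ∈ Icc 1 k, h i) * e k := by
  simp_rw [tailSum_apply, mul_sum, sum_mul]
  exact sum_comm' fun i k => by simp only [mem_Icc]; omega

theorem PLossFeasible.congr {y z : ℕ → ℝ} (hy : PLossFeasible W N n ybar v y) (hn : 1 ≤ n)
    (hyz : ∀ i ∈ Icc 1 n, y i = z i) : PLossFeasible W N n ybar v z := by
  obtain ⟨hy1, hyn, hchain, hsum⟩ := hy
  refine ⟨hyz 1 (by simp [hn]) ▸ hy1, hyz n (by simp [hn]) ▸ hyn, fun i hi => ?_, ?_⟩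
  · have := mem_Icc.1 hi
    rw [← hyz i (by simp; omega), ← hyz (i + 1) (by simp; omega)]
    exact hchain i hi
  · rw [← hsum]
    exact sum_congr rfl fun i hi => by rw [hyz i hi]

theorem pLossFeasible_tailSum {w : ℕ → ℝ} (hw : w ∈ momentSet (Icc 0 n) (cumLossW W N) ybar v) :
    PLossFeasible W N n ybar v (tailSum n w) :=
  ⟨(tailSum_le_tailSum hw.2.1 zero_le_one).trans_eq hw.2.2.1, tailSum_nonneg hw.2.1 n,
    fun i _ => tailSum_le_tailSum hw.2.1 i.le_succ, (sum_mul_tailSum _ _).trans hw.2.2.2⟩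

theorem pLossFeasible_const (hH : 0 < cumLossW W N n) (hv0 : 0 ≤ v)
    (hv1 : v ≤ ybar * cumLossW W N n) :
    PLossFeasible W N n ybar v fun _ => v / cumLossW W N n :=
  ⟨(div_le_iff₀ hH).2 hv1, div_nonneg hv0 hH.le, fun _ _ => le_rfl,
    by rw [← sum_mul, ← cumLossW, mul_div_cancel₀ _ hH.ne']⟩

noncomputable def extendLevels (ybar : ℝ) (n : ℕ) (y : ℕ → ℝ) (k : ℕ) : ℝ :=
  if k = 0 then ybar else if k ≤ n then y k else 0

noncomputable def increments (ybar : ℝ) (n : ℕ) (y : ℕ → ℝ) (k : ℕ) : ℝ :=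
  extendLevels ybar n y k - extendLevels ybar n y (k + 1)

theorem tailSum_increments (y : ℕ → ℝ) {i : ℕ} (hi : i ≤ n) :
    tailSum n (increments ybar n y) i = extendLevels ybar n y i := by
  have hend : extendLevels ybar n y (n + 1) = 0 := by simp [extendLevels]
  have htel := sum_Icc_sub hi fun j => -extendLevels ybar n y j
  simp only [neg_sub_neg, hend, sub_zero] at htel
  exact htel

theorem tailSum_increments_of_mem (y : ℕ → ℝ) {i : ℕ} (hi : i ∈ Icc 1 n) :
    tailSum n (increments ybar n y) i = y i := by
  rw [tailSum_increments y (mem_Icc.1 hi).2, extendLevels, if_neg (by simp at hi; omega),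
    if_pos (mem_Icc.1 hi).2]

theorem increments_mem_momentSet {y : ℕ → ℝ} (hy : PLossFeasible W N n ybar v y) (hn : 1 ≤ n) :
    increments ybar n y ∈ momentSet (Icc 0 n) (cumLossW W N) ybar v := by
  obtain ⟨hy1, hyn, hchain, hsum⟩ := hy
  refine ⟨fun k hk => ?_, fun k => ?_, ?_, ?_⟩
  · have hnk : n < k := by simpa using hk
    simp [increments, extendLevels, show k ≠ 0 by omega, show ¬ k ≤ n by omega, hnk.not_gt]
  · rcases k.eq_zero_or_pos with rfl | hk0
    · simpa [increments, extendLevels, hn] using hy1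
    rcases lt_trichotomy k n with hkn | rfl | hkn
    · simpa [increments, extendLevels, hk0.ne', hkn.le, hkn] using hchain k (by simp; omega)
    · simpa [increments, extendLevels, hk0.ne'] using hyn
    · simp [increments, extendLevels, hk0.ne', hkn.not_ge, hkn.not_gt]
  · exact (tailSum_increments y (Nat.zero_le n)).trans (if_pos rfl)
  · unfold cumLossW
    rw [← hsum, ← sum_mul_tailSum]
    exact sum_congr rfl fun i hi => by rw [tailSum_increments_of_mem y hi]

theorem nonempty_momentSet_cumLossW (hW : StrictMonoOn W (Set.Icc 0 1)) (hn : 1 ≤ n)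
    (hnN : n ≤ N) (hv0 : 0 ≤ v) (hv1 : v ≤ ybar * cumLossW W N n) :
    (momentSet (Icc 0 n) (cumLossW W N) ybar v).Nonempty := by
  have hpos : 0 < cumLossW W N n := by
    simpa [cumLossW] using cumLossW_strictMonoOn hW (Nat.zero_le N) (show n ∈ Set.Iic N from hnN) hn
  exact ⟨_, increments_mem_momentSet (pLossFeasible_const hpos hv0 hv1) hn⟩

theorem tailSum_twoPointWeights (x : ℕ → ℝ) (m μ : ℝ) {a b : ℕ} (hab : a < b) (hbn : b ≤ n)
    (i : ℕ) : tailSum n (twoPointWeights x m μ a b) i =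
      if i ≤ a then m else if i ≤ b then twoPointLevel x m μ a b else 0 := by
  simp only [tailSum_apply, twoPointWeights, Pi.add_apply, sum_add_distrib, sum_pi_single',
    mem_Icc]
  split_ifs <;> first | omega | ring

noncomputable def lossValue (lam p : ℝ) (n : ℕ) (y : ℕ → ℝ) : ℝ :=
  ∑ i ∈ Icc 1 n, (y i / lam) ^ p

theorem convexOn_lossValue {lam p : ℝ} (hlam : 0 < lam) (hp : 1 ≤ p) :
    ConvexOn ℝ {y | ∀ i ∈ Icc 1 n, 0 ≤ y i} (lossValue lam p n) := by
  refine ⟨fun y hy z hz a b ha hb _ i hi => ?_, fun y hy z hz a b ha hb hab => ?_⟩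
  · have := hy i hi; have := hz i hi
    simp only [Pi.add_apply, Pi.smul_apply, smul_eq_mul]
    positivity
  simp only [lossValue, smul_eq_mul, mul_sum, ← sum_add_distrib]
  refine sum_le_sum fun i hi => ?_
  have := (convexOn_rpow hp).2 (div_nonneg (hy i hi) hlam.le) (div_nonneg (hz i hi) hlam.le)
    ha hb hab
  simpa [add_div, mul_div_assoc] using this

end LossSubproblem

theorem ploss_optimal_solution_general (W : ℝ → ℝ) (N n : ℕ) (β lam ybar v : ℝ)
    (hW : IsPWF W) (hn1 : 1 ≤ n) (hnN : n ≤ N)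
    (hβ0 : 0 < β) (hβ1 : β < 1) (hlam : 0 < lam)
    (hv0 : 0 ≤ v) (hv1 : v ≤ ybar * ∑ i ∈ Finset.Icc 1 n, lossW W N i) :
    ∃ l1 l2 : ℕ, ∃ Y : ℝ, l1 < l2 ∧ l2 ≤ n ∧
      Y = (v - ybar * ∑ i ∈ Finset.Icc 1 l1, lossW W N i) /
            ∑ i ∈ Finset.Icc (l1 + 1) l2, lossW W N i ∧
      0 ≤ Y ∧ Y ≤ ybar ∧
      PLossFeasible W N n ybar v
        (fun i => if i ≤ l1 then ybar else if i ≤ l2 then Y else 0) ∧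
      ∀ y : ℕ → ℝ, PLossFeasible W N n ybar v y →
        -∑ i ∈ Finset.Icc 1 n,
            ((if i ≤ l1 then ybar else if i ≤ l2 then Y else 0) / lam) ^ (1 / β)
          ≤ -∑ i ∈ Finset.Icc 1 n, (y i / lam) ^ (1 / β) := by
  set K := momentSet (Icc 0 n) (cumLossW W N) ybar v
  have hinj : Set.InjOn (cumLossW W N) (Icc 0 n) :=
    (cumLossW_strictMonoOn hW.1.1).injOn.mono fun k hk => (mem_Icc.1 hk).2.trans hnN
  have hs : 1 < #(Icc 0 n) := by simp; omega
  have hconv : ConvexOn ℝ K (lossValue lam (1 / β) n ∘ tailSum n) :=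
    ((convexOn_lossValue hlam (one_le_one_div hβ0 hβ1.le)).comp_linearMap _).subset
      (fun w hw i _ => tailSum_nonneg hw.2.1 i) (convex_momentSet ..)
  obtain ⟨w, hw, hmax⟩ := hconv.exists_mem_extremePoints_isMaxOn (isCompact_momentSet ..)
    (nonempty_momentSet_cumLossW hW.1.1 hn1 hnN hv0 hv1) (finite_extremePoints_momentSet hinj hs)
  obtain ⟨a, -, b, hb, hab, rfl⟩ := exists_eq_twoPointWeights_of_mem_extremePoints hw hinj hs
  have hwK := extremePoints_subset hw
  have hbn := (mem_Icc.1 hb).2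
  have hcorner : ∀ i ∈ Icc 1 n, tailSum n (twoPointWeights (cumLossW W N) ybar v a b) i =
      if i ≤ a then ybar else if i ≤ b then twoPointLevel (cumLossW W N) ybar v a b else 0 :=
    fun i _ => tailSum_twoPointWeights _ _ _ hab hbn i
  refine ⟨a, b, twoPointLevel (cumLossW W N) ybar v a b, hab, hbn,
    by rw [twoPointLevel, cumLossW_sub_cumLossW hab.le]; rfl, ?_, ?_,
    (pLossFeasible_tailSum hwK).congr hn1 hcorner, fun y hy => neg_le_neg ?_⟩
  · simpa [twoPointWeights, hab.ne'] using hwK.2.1 b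
  · simpa [twoPointWeights, hab.ne] using hwK.2.1 a
  calc lossValue lam (1 / β) n y
      = lossValue lam (1 / β) n (tailSum n (increments ybar n y)) :=
        sum_congr rfl fun i hi => by rw [tailSum_increments_of_mem y hi]
    _ ≤ lossValue lam (1 / β) n (tailSum n (twoPointWeights (cumLossW W N) ybar v a b)) :=
        hmax (increments_mem_momentSet hy hn1)
    _ = _ := sum_congr rfl fun i hi => by rw [hcorner i hi]

/-- under `0 ≤ v ≤ ȳ·∑_{i≤n} h⁻_i`, there are integers `0 ≤ ℓ₁ < ℓ₂ ≤ n`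
and `Y = (v − ȳ·∑_{i≤ℓ₁} h⁻_i)/∑_{i=ℓ₁+1}^{ℓ₂} h⁻_i` with `0 ≤ Y ≤ ȳ` such that the vector
taking the value `ȳ` on `{1,…,ℓ₁}`, `Y` on `{ℓ₁+1,…,ℓ₂}` and `0` on `{ℓ₂+1,…,n}` is a
global optimum of the price-constrained loss subproblem. -/
theorem ploss_optimal_solution (W : ℝ → ℝ) (N n : ℕ) (β lam ybar v : ℝ)
    (hW : IsPWF W) (hn1 : 1 ≤ n) (hnN : n ≤ N)
    (hβ0 : 0 < β) (hβ1 : β < 1) (hlam : 0 < lam) (hybar : 0 < ybar)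
    (hv0 : 0 ≤ v) (hv1 : v ≤ ybar * ∑ i ∈ Finset.Icc 1 n, lossW W N i) :
    ∃ l1 l2 : ℕ, ∃ Y : ℝ, l1 < l2 ∧ l2 ≤ n ∧
      Y = (v - ybar * ∑ i ∈ Finset.Icc 1 l1, lossW W N i) /
            ∑ i ∈ Finset.Icc (l1 + 1) l2, lossW W N i ∧
      0 ≤ Y ∧ Y ≤ ybar ∧
      PLossFeasible W N n ybar v
        (fun i => if i ≤ l1 then ybar else if i ≤ l2 then Y else 0) ∧
      ∀ y : ℕ → ℝ, PLossFeasible W N n ybar v y →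
        -∑ i ∈ Finset.Icc 1 n,
            ((if i ≤ l1 then ybar else if i ≤ l2 then Y else 0) / lam) ^ (1 / β)
          ≤ -∑ i ∈ Finset.Icc 1 n, (y i / lam) ^ (1 / β) :=
  ploss_optimal_solution_general W N n β lam ybar v hW hn1 hnN hβ0 hβ1 hlam hv0 hv1
end

section
/- Let α, β ∈ (0,1) with β ≤ α (equivalently 1 < 1/α ≤ 1/β) and let A, B > 0. Define f(κ) = (A + κ)^{1/α} − B·κ^{1/β} for κ ∈ [0,1]. Then f attains its minimum over [0,1] at an endpoint: min_{κ ∈ [0,1]} f(κ) = min( f(0), f(1) ). -/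
/-! Put `q = 1/α ≤ p = 1/β`. The function `f κ = (A + κ)^q − B κ^p` lies above the chord
`(1 − κ^p) f 0 + κ^p f 1`, which is at least `min (f 0) (f 1)`. This reduces to
`κ^p ((A + 1)^q − A^q) ≤ (A + κ)^q − A^q`; since `κ^p ≤ κ^q` it suffices to prove it for `κ^q`,
and then the left side is `(κA + κ)^q − (κA)^q`: an increment of the convex function `t ↦ t^q` over a
step of length `κ` taken at `κA ≤ A`, hence at most the increment at `A`. -/

-- `x + c` and `y` are complementary convex combinations of `x` and `y + c`.
theorem ConvexOn.map_add_sub_map_le_map_add_sub_map {𝕜 : Type*} [Field 𝕜] [LinearOrder 𝕜]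
    [IsStrictOrderedRing 𝕜] {s : Set 𝕜} {f : 𝕜 → 𝕜} (hf : ConvexOn 𝕜 s f) {x y c : 𝕜}
    (hx : x ∈ s) (hyc : y + c ∈ s) (hxy : x ≤ y) (hc : 0 ≤ c) :
    f (x + c) - f x ≤ f (y + c) - f y := by
  rcases (add_le_add hxy hc).eq_or_lt with hdeg | hlt
  · obtain rfl : y = x := by linarith
    obtain rfl : c = 0 := by linarith
    simp
  have hd : 0 < y + c - x := by linarith
  have ha : 0 ≤ (y - x) / (y + c - x) := div_nonneg (sub_nonneg.2 hxy) hd.le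
  have hb : 0 ≤ c / (y + c - x) := div_nonneg hc hd.le
  have hab : (y - x) / (y + c - x) + c / (y + c - x) = 1 := by field_simp; ring
  have hxc := hf.2 hx hyc ha hb hab
  have hy := hf.2 hx hyc hb ha (by rw [add_comm, hab])
  have hxc_eq : ((y - x) / (y + c - x)) • x + (c / (y + c - x)) • (y + c) = x + c := by
    simp only [smul_eq_mul]; field_simp; ring
  have hy_eq : (c / (y + c - x)) • x + ((y - x) / (y + c - x)) • (y + c) = y := by
    simp only [smul_eq_mul]; field_simp; ring
  rw [hxc_eq, smul_eq_mul, smul_eq_mul] at hxc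
  rw [hy_eq, smul_eq_mul, smul_eq_mul] at hy
  linear_combination hxc + hy + (f x + f (y + c)) * hab

namespace Real

theorem rpow_mul_add_one_sub_rpow_le {q A κ : ℝ} (hq : 1 ≤ q) (hA : 0 ≤ A) (hκ0 : 0 ≤ κ)
    (hκ1 : κ ≤ 1) : κ ^ q * ((A + 1) ^ q - A ^ q) ≤ (A + κ) ^ q - A ^ q := by
  have hscale : κ ^ q * ((A + 1) ^ q - A ^ q) = (κ * A + κ) ^ q - (κ * A) ^ q := by
    rw [mul_sub, ← mul_rpow hκ0 (by linarith), ← mul_rpow hκ0 hA, mul_add_one]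
  rw [hscale]
  exact (convexOn_rpow hq).map_add_sub_map_le_map_add_sub_map (mul_nonneg hκ0 hA)
    (by simp only [Set.mem_Ici]; linarith) (mul_le_of_le_one_left hA hκ1) hκ0

theorem chord_le_rpow_add_sub_mul_rpow {p q A κ : ℝ} (B : ℝ) (hq : 1 ≤ q) (hqp : q ≤ p)
    (hA : 0 ≤ A) (hκ0 : 0 ≤ κ) (hκ1 : κ ≤ 1) :
    (1 - κ ^ p) * A ^ q + κ ^ p * ((A + 1) ^ q - B) ≤ (A + κ) ^ q - B * κ ^ p := by
  have hpq : κ ^ p ≤ κ ^ q := rpow_le_rpow_of_exponent_ge' hκ0 hκ1 (by linarith) hqp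
  have hgap : 0 ≤ (A + 1) ^ q - A ^ q :=
    sub_nonneg.2 (rpow_le_rpow hA (by linarith) (by linarith))
  nlinarith [rpow_mul_add_one_sub_rpow_le hq hA hκ0 hκ1]

end Real

open Real in
theorem endpoint_minimum_general (α β A B : ℝ)
    (hα0 : 0 < α) (hα1 : α < 1) (hβ0 : 0 < β) (hβα : β ≤ α)
    (hA : 0 < A) :
    IsLeast ((fun κ : ℝ => (A + κ) ^ (1 / α) - B * κ ^ (1 / β)) '' Set.Icc (0 : ℝ) 1)
      (min ((A + 0) ^ (1 / α) - B * (0 : ℝ) ^ (1 / β))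
        ((A + 1) ^ (1 / α) - B * (1 : ℝ) ^ (1 / β))) := by
  have hq : 1 ≤ 1 / α := (one_lt_one_div hα0 hα1).le
  have hqp : 1 / α ≤ 1 / β := one_div_le_one_div_of_le hβ0 hβα
  refine ⟨?_, ?_⟩
  · rcases min_cases ((A + 0) ^ (1 / α) - B * (0 : ℝ) ^ (1 / β))
      ((A + 1) ^ (1 / α) - B * (1 : ℝ) ^ (1 / β)) with ⟨h, -⟩ | ⟨h, -⟩ <;> rw [h]
    · exact ⟨0, Set.left_mem_Icc.2 zero_le_one, rfl⟩
    · exact ⟨1, Set.right_mem_Icc.2 zero_le_one, rfl⟩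
  · rintro _ ⟨κ, ⟨hκ0, hκ1⟩, rfl⟩
    have hchord := chord_le_rpow_add_sub_mul_rpow B hq hqp hA.le hκ0 hκ1
    have hweight0 : 0 ≤ κ ^ (1 / β) := rpow_nonneg hκ0 _
    have hweight1 : κ ^ (1 / β) ≤ 1 := rpow_le_one hκ0 hκ1 (by linarith)
    rw [add_zero, zero_rpow (by linarith), one_rpow, mul_zero, sub_zero, mul_one]
    nlinarith [min_le_left (A ^ (1 / α)) ((A + 1) ^ (1 / α) - B),
      min_le_right (A ^ (1 / α)) ((A + 1) ^ (1 / α) - B)]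

/-- for `β ≤ α` in `(0,1)` and `A, B > 0`, the function
`f(κ) = (A + κ)^{1/α} − B·κ^{1/β}` attains its minimum over `[0,1]` at an endpoint:
the minimum equals `min (f 0) (f 1)`. -/
theorem endpoint_minimum (α β A B : ℝ)
    (hα0 : 0 < α) (hα1 : α < 1) (hβ0 : 0 < β) (hβ1 : β < 1) (hβα : β ≤ α)
    (hA : 0 < A) (hB : 0 < B) :
    IsLeast ((fun κ : ℝ => (A + κ) ^ (1 / α) - B * κ ^ (1 / β)) '' Set.Icc (0 : ℝ) 1)
      (min ((A + 0) ^ (1 / α) - B * (0 : ℝ) ^ (1 / β))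
        ((A + 1) ^ (1 / α) - B * (1 : ℝ) ^ (1 / β))) :=
  endpoint_minimum_general α β A B hα0 hα1 hβ0 hβα hA
end

section
/- Let b₁, b₂ ∈ ℝ with 1 < b₁ ≤ b₂, let A, B > 0 and let κ > 0. If b₁·(A + κ)^{b₁ − 1} = b₂·B·κ^{b₂ − 1} (i.e., κ is a critical point of f(κ) = (A + κ)^{b₁} − B·κ^{b₂}), then b₁·(b₁ − 1)·(A + κ)^{b₁ − 2} − b₂·(b₂ − 1)·B·κ^{b₂ − 2} < 0 (i.e., the second derivative of f at κ is strictly negative, so every positive critical point of f is a strict local maximum). -/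
/-- if `1 < b₁ ≤ b₂`, `A, B > 0`, `κ > 0` and
`b₁·(A + κ)^{b₁−1} = b₂·B·κ^{b₂−1}` (a critical point of `f(κ) = (A+κ)^{b₁} − B·κ^{b₂}`),
then `b₁·(b₁−1)·(A+κ)^{b₁−2} − b₂·(b₂−1)·B·κ^{b₂−2} < 0`. -/
theorem second_deriv_neg_at_critical (b1 b2 A B κ : ℝ)
    (hb1 : 1 < b1) (hb12 : b1 ≤ b2) (hA : 0 < A) (hB : 0 < B) (hκ : 0 < κ)
    (hcrit : b1 * (A + κ) ^ (b1 - 1) = b2 * B * κ ^ (b2 - 1)) :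
    b1 * (b1 - 1) * (A + κ) ^ (b1 - 2) - b2 * (b2 - 1) * B * κ ^ (b2 - 2) < 0 := by
  have hx : (0:ℝ) < A + κ := by linarith
  have hP : 0 < b1 * (A + κ) ^ (b1 - 1) := by positivity
  have h1 : (A + κ) ^ (b1 - 2) = (A + κ) ^ (b1 - 1) / (A + κ) := by
    rw [← Real.rpow_sub_one hx.ne' (b1 - 1)]; ring_nf
  have h2 : κ ^ (b2 - 2) = κ ^ (b2 - 1) / κ := by
    rw [← Real.rpow_sub_one hκ.ne' (b2 - 1)]; ring_nf
  rw [h1, h2, sub_neg]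
  have e1 : b1 * (b1 - 1) * ((A + κ) ^ (b1 - 1) / (A + κ))
      = (b1 - 1) / (A + κ) * (b1 * (A + κ) ^ (b1 - 1)) := by ring
  have e2 : b2 * (b2 - 1) * B * (κ ^ (b2 - 1) / κ)
      = (b2 - 1) / κ * (b1 * (A + κ) ^ (b1 - 1)) := by
    rw [hcrit]; ring
  rw [e1, e2]
  apply mul_lt_mul_of_pos_right _ hP
  rw [div_lt_div_iff₀ hx hκ]
  nlinarith
end
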